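/- arXiv:1705.04959 — 7 statements merged into one kernel-verified Lean document; each statement's English description precedes it below -/
import Mathlib

section
/- Let T > 0 and suppose λ ≤ 0 componentwise. Then M-CLP is feasible if and only if the Test-LP constraints are satisfiable, i.e. there exist vectors u, W ∈ ℝ^J with u ≥ 0, W ≥ 0, A·u ≤ β componentwise, and A·(u + W) ≤ β + T·b + λ componentwise. Moreover, for any such pair (u, W), the function U(t) = u + (t/T)·W, 0 ≤ t ≤ T, is a feasible solution of M-CLP. -/
open MeasureTheory Filter

/-- A feasible solution of M-CLP: `U : [0,T] → ℝ^J` componentwise nondecreasing,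
right-continuous, with `U 0 ≥ 0` (the jump at `0`, by the convention `U(0-) = 0`),
satisfying `A·U(t) ≤ β + t·b` for `0 ≤ t < T` and `A·U(T) ≤ β + T·b + λ`. -/
def PrimalFeasible {K J : ℕ} (A : Matrix (Fin K) (Fin J) ℝ) (b β lam : Fin K → ℝ) (T : ℝ)
    (U : ℝ → Fin J → ℝ) : Prop :=
  (∀ j, MonotoneOn (fun t => U t j) (Set.Icc 0 T)) ∧
  (∀ j, ∀ t ∈ Set.Ico (0:ℝ) T,
    Tendsto (fun s => U s j) (nhdsWithin t (Set.Ioi t)) (nhds (U t j))) ∧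
  (∀ j, 0 ≤ U 0 j) ∧
  (∀ t ∈ Set.Ico (0:ℝ) T, ∀ k, A.mulVec (U t) k ≤ β k + t * b k) ∧
  (∀ k, A.mulVec (U T) k ≤ β k + T * b k + lam k)

/-- M-CLP is feasible iff the Test-LP constraints are satisfiable; moreover any
solution `(u, W)` of the Test-LP constraints yields the feasible solution
`U(t) = u + (t/T)·W` of M-CLP. -/
theorem mclp_feasible_iff_testLP {K J : ℕ}
    (A : Matrix (Fin K) (Fin J) ℝ) (b β lam : Fin K → ℝ) (T : ℝ)
    (hT : 0 < T) (hlam : ∀ k, lam k ≤ 0) :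
    ((∃ U, PrimalFeasible A b β lam T U) ↔
      ∃ u W : Fin J → ℝ, (∀ j, 0 ≤ u j) ∧ (∀ j, 0 ≤ W j) ∧
        (∀ k, A.mulVec u k ≤ β k) ∧
        (∀ k, A.mulVec (u + W) k ≤ β k + T * b k + lam k)) ∧
    (∀ u W : Fin J → ℝ, (∀ j, 0 ≤ u j) → (∀ j, 0 ≤ W j) →
      (∀ k, A.mulVec u k ≤ β k) →
      (∀ k, A.mulVec (u + W) k ≤ β k + T * b k + lam k) →
      PrimalFeasible A b β lam T (fun t => u + (t / T) • W)) := by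
  have key : ∀ u W : Fin J → ℝ, (∀ j, 0 ≤ u j) → (∀ j, 0 ≤ W j) →
      (∀ k, A.mulVec u k ≤ β k) →
      (∀ k, A.mulVec (u + W) k ≤ β k + T * b k + lam k) →
      PrimalFeasible A b β lam T (fun t => u + (t / T) • W) := by
    intro u W hu hW hAu hAuW
    have hlin : ∀ (t : ℝ) (k : Fin K),
        A.mulVec (u + (t / T) • W) k = A.mulVec u k + (t / T) * A.mulVec W k := by
      intro t k
      simp [Matrix.mulVec_add, Matrix.mulVec_smul]
    have hWk : ∀ k, A.mulVec W k = A.mulVec (u + W) k - A.mulVec u k := by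
      intro k; simp [Matrix.mulVec_add]
    refine ⟨?_, ?_, ?_, ?_, ?_⟩
    · intro j a ha c hc hac
      simp only [Pi.add_apply, Pi.smul_apply, smul_eq_mul]
      have h : a / T ≤ c / T := by gcongr
      nlinarith [mul_le_mul_of_nonneg_right h (hW j)]
    · intro j t _
      have hc : Continuous (fun s : ℝ => u j + (s / T) * W j) := by continuity
      exact (hc.tendsto t).mono_left nhdsWithin_le_nhds
    · intro j
      simp only [Pi.add_apply, Pi.smul_apply, smul_eq_mul, zero_div, zero_mul, add_zero]
      exact hu j
    · intro t ht k
      have hs0 : 0 ≤ t / T := div_nonneg ht.1 hT.le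
      have hs1 : t / T ≤ 1 := (div_le_one hT).2 ht.2.le
      have hst : (t / T) * T = t := div_mul_cancel₀ t hT.ne'
      have h1 := hAu k
      have h2 := hAuW k
      have h3 := hlam k
      rw [hlin, hWk]
      have h4 : t / T * T * b k = t * b k := by rw [hst]
      nlinarith [mul_le_mul_of_nonneg_left h1 (sub_nonneg.2 hs1),
        mul_le_mul_of_nonneg_left h2 hs0,
        mul_nonpos_of_nonneg_of_nonpos hs0 h3]
    · intro k
      have hst : T / T = 1 := div_self hT.ne'
      rw [hlin, hWk, hst]
      have h2 := hAuW k
      linarith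
  refine ⟨⟨?_, ?_⟩, key⟩
  · rintro ⟨U, hmono, _, hU0, hIco, hT'⟩
    refine ⟨U 0, fun j => U T j - U 0 j, hU0, ?_, ?_, ?_⟩
    · intro j
      exact sub_nonneg.2 (hmono j ⟨le_rfl, hT.le⟩ ⟨hT.le, le_rfl⟩ hT.le)
    · intro k
      have := hIco 0 ⟨le_refl 0, hT⟩ k
      simpa using this
    · intro k
      have hUT : (U 0 + fun j => U T j - U 0 j) = U T := by
        funext j; simp
      rw [hUT]
      exact hT' k
  · rintro ⟨u, W, hu, hW, hAu, hAuW⟩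
    exact ⟨_, key u W hu hW hAu hAuW⟩
end

section
/- Let T > 0 and suppose μ ≥ 0 componentwise. Then M-CLP* is feasible if and only if there exist vectors p, Q ∈ ℝ^K with p ≥ 0, Q ≥ 0, Aᵀ·p ≥ γ componentwise, and Aᵀ·(p + Q) ≥ γ + T·c + μ componentwise. Moreover, for any such pair (p, Q), the function P(s) = p + (s/T)·Q, 0 ≤ s ≤ T, is a feasible solution of M-CLP*. -/
open MeasureTheory Filter

/-- A feasible solution of M-CLP*: `P : [0,T] → ℝ^K` componentwise nondecreasing,
right-continuous, with `P 0 ≥ 0` (the jump at `0`, by the convention `P(0-) = 0`),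
satisfying `Aᵀ·P(s) ≥ γ + s·c` for `0 ≤ s < T` and `Aᵀ·P(T) ≥ γ + T·c + μ`. -/
def DualFeasible {K J : ℕ} (A : Matrix (Fin K) (Fin J) ℝ) (c γ μ : Fin J → ℝ) (T : ℝ)
    (P : ℝ → Fin K → ℝ) : Prop :=
  (∀ k, MonotoneOn (fun s => P s k) (Set.Icc 0 T)) ∧
  (∀ k, ∀ s ∈ Set.Ico (0:ℝ) T,
    Tendsto (fun r => P r k) (nhdsWithin s (Set.Ioi s)) (nhds (P s k))) ∧
  (∀ k, 0 ≤ P 0 k) ∧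
  (∀ s ∈ Set.Ico (0:ℝ) T, ∀ j, γ j + s * c j ≤ A.transpose.mulVec (P s) j) ∧
  (∀ j, γ j + T * c j + μ j ≤ A.transpose.mulVec (P T) j)

lemma dualFeasible_of_testLP {K J : ℕ}
    (A : Matrix (Fin K) (Fin J) ℝ) (c γ μ : Fin J → ℝ) (T : ℝ)
    (hT : 0 < T) (hμ : ∀ j, 0 ≤ μ j) (p Q : Fin K → ℝ)
    (hp : ∀ k, 0 ≤ p k) (hQ : ∀ k, 0 ≤ Q k)
    (h1 : ∀ j, γ j ≤ A.transpose.mulVec p j)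
    (h2 : ∀ j, γ j + T * c j + μ j ≤ A.transpose.mulVec (p + Q) j) :
    DualFeasible A c γ μ T (fun s => p + (s / T) • Q) := by
  have h2' : ∀ j, γ j + T * c j + μ j ≤
      A.transpose.mulVec p j + A.transpose.mulVec Q j := by
    intro j
    have := h2 j
    rwa [Matrix.mulVec_add, Pi.add_apply] at this
  have hTT : T / T = 1 := div_self hT.ne'
  refine ⟨?_, ?_, ?_, ?_, ?_⟩
  · intro k a _ b _ hab
    simp only [Pi.add_apply, Pi.smul_apply, smul_eq_mul]
    have : a / T * Q k ≤ b / T * Q k :=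
      mul_le_mul_of_nonneg_right (by gcongr) (hQ k)
    linarith
  · intro k s _
    have hcont : Continuous (fun r : ℝ => p k + r / T * Q k) := by
      fun_prop
    simpa using (hcont.tendsto s).mono_left nhdsWithin_le_nhds
  · intro k
    simp [hp k]
  · intro s hs j
    have hθ0 : 0 ≤ s / T := div_nonneg hs.1 hT.le
    have hθ1 : s / T ≤ 1 := by
      rw [div_le_one hT]; exact hs.2.le
    have hsT : s / T * T = s := div_mul_cancel₀ s hT.ne'
    rw [Matrix.mulVec_add, Matrix.mulVec_smul, Pi.add_apply, Pi.smul_apply,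
      smul_eq_mul]
    have key : A.transpose.mulVec p j + s / T * A.transpose.mulVec Q j
        - (γ j + s * c j)
        = (1 - s / T) * (A.transpose.mulVec p j - γ j)
          + (s / T) * (A.transpose.mulVec p j + A.transpose.mulVec Q j
              - (γ j + T * c j + μ j))
          + (s / T) * μ j := by
      field_simp
      ring
    nlinarith [mul_nonneg (sub_nonneg.2 hθ1) (sub_nonneg.2 (h1 j)),
      mul_nonneg hθ0 (sub_nonneg.2 (h2' j)), mul_nonneg hθ0 (hμ j), key]
  · intro j
    simp only [hTT, one_smul]
    exact h2 j

/-- M-CLP* is feasible iff its Test-LP constraints are satisfiable; moreover any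
solution `(p, Q)` of these constraints yields the feasible solution
`P(s) = p + (s/T)·Q` of M-CLP*. -/
theorem mclpStar_feasible_iff_testLP {K J : ℕ}
    (A : Matrix (Fin K) (Fin J) ℝ) (c γ μ : Fin J → ℝ) (T : ℝ)
    (hT : 0 < T) (hμ : ∀ j, 0 ≤ μ j) :
    ((∃ P, DualFeasible A c γ μ T P) ↔
      ∃ p Q : Fin K → ℝ, (∀ k, 0 ≤ p k) ∧ (∀ k, 0 ≤ Q k) ∧
        (∀ j, γ j ≤ A.transpose.mulVec p j) ∧
        (∀ j, γ j + T * c j + μ j ≤ A.transpose.mulVec (p + Q) j)) ∧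
    (∀ p Q : Fin K → ℝ, (∀ k, 0 ≤ p k) → (∀ k, 0 ≤ Q k) →
      (∀ j, γ j ≤ A.transpose.mulVec p j) →
      (∀ j, γ j + T * c j + μ j ≤ A.transpose.mulVec (p + Q) j) →
      DualFeasible A c γ μ T (fun s => p + (s / T) • Q)) := by
  constructor
  · constructor
    · rintro ⟨P, hmono, _, h0, hmid, hend⟩
      refine ⟨P 0, P T - P 0, h0, ?_, ?_, ?_⟩
      · intro k
        have := hmono k (Set.mem_Icc.2 ⟨le_refl 0, hT.le⟩)
          (Set.mem_Icc.2 ⟨hT.le, le_refl T⟩) hT.le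
        simpa [sub_nonneg] using this
      · intro j
        have := hmid 0 ⟨le_refl 0, hT⟩ j
        simpa using this
      · intro j
        have := hend j
        simpa using this
    · rintro ⟨p, Q, hp, hQ, h1, h2⟩
      exact ⟨_, dualFeasible_of_testLP A c γ μ T hT hμ p Q hp hQ h1 h2⟩
  · intro p Q hp hQ h1 h2
    exact dualFeasible_of_testLP A c γ μ T hT hμ p Q hp hQ h1 h2
end

section
/- Suppose the boundary parameters satisfy, componentwise, β > 0, λ < 0, β + T·b + λ > 0, γ < 0, μ > 0, and γ + T·c + μ < 0, with T > 0. Then U ≡ 0 is a feasible solution of M-CLP with objective value 0, it is optimal, i.e. every feasible solution U of M-CLP satisfies z(U) ≤ 0, and it is the unique optimal solution: any feasible U with z(U) = 0 satisfies U(t) = 0 for all t ∈ [0,T]. -/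
open MeasureTheory Filter

/-- `ν i` is the Lebesgue–Stieltjes measure on `[0,T]` of the (right-continuous,
nondecreasing) function `F · i`, with the convention `F (0-) i = 0`:
it is carried by `[0,T]` and satisfies `ν i [0,x] = F x i` for all `x ∈ [0,T]`. -/
def LSFamily {I : Type*} (T : ℝ) (F : ℝ → I → ℝ) (ν : I → Measure ℝ) : Prop :=
  ∀ i, ν i (Set.Icc 0 T)ᶜ = 0 ∧
    ∀ x ∈ Set.Icc (0:ℝ) T, ν i (Set.Icc 0 x) = ENNReal.ofReal (F x i)

/-- The M-CLP objective `z(U) = μᵀU(0) + Σ_j ∫_{[0,T]} (γ_j + (T-t)c_j) dU_j(t)`,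
the measures `dU_j` being given by `ν`. -/
noncomputable def zPrimal {J : ℕ} (c γ μ : Fin J → ℝ) (T : ℝ) (U : ℝ → Fin J → ℝ)
    (ν : Fin J → Measure ℝ) : ℝ :=
  (∑ j, μ j * U 0 j) + ∑ j, ∫ t in Set.Icc (0:ℝ) T, (γ j + (T - t) * c j) ∂(ν j)

/-!
On `[0,T]` the integrand `γ_j + (T - t) c_j` is affine in `t`, hence at most
`max γ_j (γ_j + T c_j)`, and at `t = 0` the reward `μ_j` of the atom `U_j(0)` raises it to
`γ_j + T c_j + μ_j`. So every unit of mass of `dU_j` contributes at most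
`m_j = max γ_j (γ_j + T c_j + μ_j) < 0`, whence `z(U) ≤ ∑ j, m_j U_j(T) ≤ 0`. Equality forces
`U(T) = 0`, and then `0 ≤ U(0) ≤ U(t) ≤ U(T)` gives `U ≡ 0`.
-/

open Set

lemma add_mul_le_max_of_mem_Icc {a b s T : ℝ} (hs : s ∈ Icc 0 T) :
    a + s * b ≤ max a (a + T * b) := by
  rcases le_total b 0 with hb | hb
  · exact le_max_of_le_left (by nlinarith [hs.1])
  · exact le_max_of_le_right (by nlinarith [hs.2])

lemma min_le_add_mul_of_mem_Icc {a b s T : ℝ} (hs : s ∈ Icc 0 T) :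
    min a (a + T * b) ≤ a + s * b := by
  rcases le_total b 0 with hb | hb
  · exact min_le_of_right_le (by nlinarith [hs.2])
  · exact min_le_of_left_le (by nlinarith [hs.1])

lemma primalFeasible_zero {K J : ℕ} (A : Matrix (Fin K) (Fin J) ℝ) {b β lam : Fin K → ℝ}
    {T : ℝ} (hβ : ∀ k, 0 ≤ β k) (hβT : ∀ k, 0 ≤ β k + T * b k)
    (hβl : ∀ k, 0 ≤ β k + T * b k + lam k) :
    PrimalFeasible A b β lam T (fun _ : ℝ => (0 : Fin J → ℝ)) := by
  refine ⟨fun _ => monotoneOn_const, fun _ _ _ => tendsto_const_nhds, fun _ => le_rfl, ?_, ?_⟩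
  · intro t ht k
    simpa using (le_min (hβ k) (hβT k)).trans (min_le_add_mul_of_mem_Icc (Ico_subset_Icc_self ht))
  · intro k
    simpa using hβl k

lemma zPrimal_zero {J : ℕ} (c γ μ : Fin J → ℝ) {T : ℝ} (hT : 0 ≤ T) {ν : Fin J → Measure ℝ}
    (hν : LSFamily T (fun _ : ℝ => (0 : Fin J → ℝ)) ν) :
    zPrimal c γ μ T (fun _ : ℝ => (0 : Fin J → ℝ)) ν = 0 := by
  have hνIcc (j : Fin J) : ν j (Icc 0 T) = 0 := by simpa using (hν j).2 T ⟨hT, le_rfl⟩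
  simp [zPrimal, Measure.restrict_eq_zero.2 (hνIcc _)]

lemma mul_measureReal_singleton_add_setIntegral_Icc_le {ν : Measure ℝ} {T μ m : ℝ}
    {g : ℝ → ℝ} (hT : 0 ≤ T) (hfin : ν (Icc 0 T) ≠ ⊤) (hg : ContinuousOn g (Icc 0 T))
    (hg0 : g 0 + μ ≤ m) (hgm : ∀ t ∈ Ioc 0 T, g t ≤ m) :
    μ * ν.real {0} + ∫ t in Icc 0 T, g t ∂ν ≤ m * ν.real (Icc 0 T) := by
  have hsplit : Icc (0 : ℝ) T = {0} ∪ Ioc 0 T := by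
    rw [← Icc_self (0 : ℝ), Icc_union_Ioc_eq_Icc le_rfl hT]
  have hdisj : Disjoint ({0} : Set ℝ) (Ioc 0 T) := by simp
  have : IsFiniteMeasure (ν.restrict (Icc 0 T)) := ⟨by simpa using hfin.lt_top⟩
  have hint : IntegrableOn g (Icc 0 T) ν := by
    simpa [IntegrableOn] using hg.integrableOn_compact (μ := ν.restrict (Icc 0 T)) isCompact_Icc
  have hIoc : ∫ t in Ioc 0 T, g t ∂ν ≤ m * ν.real (Ioc 0 T) := by
    have := setIntegral_mono_on (hint.mono_set Ioc_subset_Icc_self)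
      (integrableOn_const (C := m) (measure_ne_top_of_subset Ioc_subset_Icc_self hfin))
      measurableSet_Ioc hgm
    simpa [setIntegral_const, mul_comm] using this
  have h0 : ({0} : Set ℝ) ⊆ Icc 0 T := by simp [hT]
  rw [hsplit, setIntegral_union hdisj measurableSet_Ioc (hint.mono_set h0)
    (hint.mono_set Ioc_subset_Icc_self), integral_singleton, measureReal_union hdisj
    measurableSet_Ioc (measure_ne_top_of_subset h0 hfin)
    (measure_ne_top_of_subset Ioc_subset_Icc_self hfin), smul_eq_mul]
  nlinarith [measureReal_nonneg (μ := ν) (s := {0})]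

lemma mul_apply_zero_add_setIntegral_le {ν : Measure ℝ} {F : ℝ → ℝ} {T c γ μ : ℝ}
    (hT : 0 ≤ T) (hμ : 0 ≤ μ) (hF0 : 0 ≤ F 0)
    (hνF : ∀ x ∈ Icc 0 T, ν (Icc 0 x) = ENNReal.ofReal (F x)) :
    μ * F 0 + ∫ t in Icc 0 T, (γ + (T - t) * c) ∂ν ≤
      max γ (γ + T * c + μ) * ν.real (Icc 0 T) := by
  have hatom : ν.real {0} = F 0 := by
    rw [measureReal_def, ← Icc_self, hνF 0 ⟨le_rfl, hT⟩, ENNReal.toReal_ofReal hF0]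
  rw [← hatom]
  refine mul_measureReal_singleton_add_setIntegral_Icc_le hT
    (by simp [hνF T ⟨hT, le_rfl⟩]) (by fun_prop) (by simp) fun t ht => ?_
  calc γ + (T - t) * c ≤ max γ (γ + T * c) :=
        add_mul_le_max_of_mem_Icc ⟨by linarith [ht.2], by linarith [ht.1]⟩
    _ ≤ max γ (γ + T * c + μ) := max_le_max_left _ (by linarith)

lemma zPrimal_le_sum {J : ℕ} {c γ μ : Fin J → ℝ} {T : ℝ} {U : ℝ → Fin J → ℝ}
    {ν : Fin J → Measure ℝ} (hT : 0 ≤ T) (hμ : ∀ j, 0 ≤ μ j) (hU0 : ∀ j, 0 ≤ U 0 j)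
    (hν : LSFamily T U ν) :
    zPrimal c γ μ T U ν ≤ ∑ j, max (γ j) (γ j + T * c j + μ j) * (ν j).real (Icc 0 T) := by
  rw [zPrimal, ← Finset.sum_add_distrib]
  exact Finset.sum_le_sum fun j _ =>
    mul_apply_zero_add_setIntegral_le hT (hμ j) (hU0 j) (hν j).2

lemma eq_zero_of_measureReal_Icc_eq_zero {ν : Measure ℝ} {F : ℝ → ℝ} {T : ℝ}
    (hF : MonotoneOn F (Icc 0 T)) (hF0 : 0 ≤ F 0)
    (hνF : ∀ x ∈ Icc 0 T, ν (Icc 0 x) = ENNReal.ofReal (F x)) (hν : ν.real (Icc 0 T) = 0)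
    {t : ℝ} (ht : t ∈ Icc 0 T) : F t = 0 := by
  have hT : T ∈ Icc 0 T := ⟨ht.1.trans ht.2, le_rfl⟩
  have hFT : F T ≤ 0 := by
    rwa [measureReal_def, hνF T hT, ENNReal.toReal_ofReal', max_eq_right_iff] at hν
  have h0t : F 0 ≤ F t := hF ⟨le_rfl, hT.1⟩ ht ht.1
  have htT : F t ≤ F T := hF ht hT ht.2
  linarith

/-- Under the sign conditions on the boundary parameters, `U ≡ 0` is a feasible
solution of M-CLP with objective value `0`, it is optimal, and it is the unique
optimal solution. -/
theorem zero_is_unique_optimal_mclp {K J : ℕ}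
    (A : Matrix (Fin K) (Fin J) ℝ) (b β lam : Fin K → ℝ) (c γ μ : Fin J → ℝ) (T : ℝ)
    (hT : 0 < T)
    (hβ : ∀ k, 0 < β k) (hlam : ∀ k, lam k < 0) (hβl : ∀ k, 0 < β k + T * b k + lam k)
    (hγ : ∀ j, γ j < 0) (hμ : ∀ j, 0 < μ j) (hγm : ∀ j, γ j + T * c j + μ j < 0) :
    PrimalFeasible A b β lam T (fun _ : ℝ => (0 : Fin J → ℝ)) ∧
    (∀ ν : Fin J → Measure ℝ, LSFamily T (fun _ : ℝ => (0 : Fin J → ℝ)) ν →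
      zPrimal c γ μ T (fun _ : ℝ => (0 : Fin J → ℝ)) ν = 0) ∧
    (∀ (U : ℝ → Fin J → ℝ) (ν : Fin J → Measure ℝ),
      PrimalFeasible A b β lam T U → LSFamily T U ν →
      zPrimal c γ μ T U ν ≤ 0) ∧
    (∀ (U : ℝ → Fin J → ℝ) (ν : Fin J → Measure ℝ),
      PrimalFeasible A b β lam T U → LSFamily T U ν →
      zPrimal c γ μ T U ν = 0 → ∀ t ∈ Set.Icc (0:ℝ) T, ∀ j, U t j = 0) := by
  set m : Fin J → ℝ := fun j => max (γ j) (γ j + T * c j + μ j)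
  have hm (j : Fin J) : m j < 0 := max_lt (hγ j) (hγm j)
  have hterm (ν : Fin J → Measure ℝ) (j : Fin J) : m j * (ν j).real (Icc 0 T) ≤ 0 :=
    mul_nonpos_of_nonpos_of_nonneg (hm j).le measureReal_nonneg
  have hbound (U : ℝ → Fin J → ℝ) (ν : Fin J → Measure ℝ) (hU : PrimalFeasible A b β lam T U)
      (hν : LSFamily T U ν) : zPrimal c γ μ T U ν ≤ ∑ j, m j * (ν j).real (Icc 0 T) :=
    zPrimal_le_sum hT.le (fun j => (hμ j).le) hU.2.2.1 hν
  refine ⟨primalFeasible_zero A (fun k => (hβ k).le) (fun k => by linarith [hβl k, hlam k])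
      (fun k => (hβl k).le), fun ν hν => zPrimal_zero c γ μ hT.le hν,
    fun U ν hU hν => (hbound U ν hU hν).trans (Finset.sum_nonpos fun j _ => hterm ν j), ?_⟩
  intro U ν hU hν hz t ht j
  have hsum : ∑ i, m i * (ν i).real (Icc 0 T) = 0 :=
    le_antisymm (Finset.sum_nonpos fun i _ => hterm ν i) (hz ▸ hbound U ν hU hν)
  have hνj : (ν j).real (Icc 0 T) = 0 :=
    (mul_eq_zero.1 ((Finset.sum_eq_zero_iff_of_nonpos fun i _ => hterm ν i).1 hsum j
      (Finset.mem_univ j))).resolve_left (hm j).ne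
  exact eq_zero_of_measureReal_Icc_eq_zero (hU.1 j) (hU.2.2.1 j) (hν j).2 hνj ht
end

section
/- For every feasible solution U of M-CLP with slack x and every feasible solution P of M-CLP* with slack q, the duality gap satisfies the identity z*(P) − z(U) = Σ_{k=1}^K ∫_{[0,T]} x_k(T−s) dP_k(s) + Σ_{j=1}^J ∫_{[0,T]} q_j(T−t) dU_j(t). -/
open MeasureTheory Filter

/-- The M-CLP* objective. -/
noncomputable def zDual {K : ℕ} (b β lam : Fin K → ℝ) (T : ℝ) (P : ℝ → Fin K → ℝ)
    (ν : Fin K → Measure ℝ) : ℝ :=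
  (∑ k, lam k * P 0 k) + ∑ k, ∫ s in Set.Icc (0:ℝ) T, (β k + (T - s) * b k) ∂(ν k)

/-- The primal slack `x(t) = β + t·b − A·U(t)` for `0 ≤ t < T`, and
`x(T) = β + T·b + λ − A·U(T)`. -/
noncomputable def xSlack {K J : ℕ} (A : Matrix (Fin K) (Fin J) ℝ) (b β lam : Fin K → ℝ)
    (T : ℝ) (U : ℝ → Fin J → ℝ) (t : ℝ) (k : Fin K) : ℝ :=
  β k + t * b k + (if t < T then 0 else lam k) - A.mulVec (U t) k

/-- The dual slack `q(s) = Aᵀ·P(s) − γ − s·c` for `0 ≤ s < T`, and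
`q(T) = Aᵀ·P(T) − γ − T·c − μ`. -/
noncomputable def qSlack {K J : ℕ} (A : Matrix (Fin K) (Fin J) ℝ) (c γ μ : Fin J → ℝ)
    (T : ℝ) (P : ℝ → Fin K → ℝ) (s : ℝ) (j : Fin J) : ℝ :=
  A.transpose.mulVec (P s) j - γ j - s * c j - (if s < T then 0 else μ j)

/-!
After the substitution `t ↦ T − s`, each slack is affine in the integration variable, plus a
jump at `0`, minus the cross terms `∑ⱼ A k j U_j(T − s)` (resp. `∑ₖ A k j P_k(T − t)`).
Integrating, the affine parts and jumps reproduce `z*(P)` and `−z(U)`, and the cross terms cancel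
because `∫ U_j(T − s) dP_k(s) = ∫ P_k(T − t) dU_j(t)`: by Fubini, both are the
`dU_j ⊗ dP_k`-measure of the triangle `{(t, s) | t + s ≤ T}`.
-/

open Set

def IsLSMeasureOn (T : ℝ) (F : ℝ → ℝ) (ν : Measure ℝ) : Prop :=
  ν (Icc 0 T)ᶜ = 0 ∧ ∀ x ∈ Icc (0:ℝ) T, ν (Icc 0 x) = ENNReal.ofReal (F x)

lemma LSFamily.isLSMeasureOn {I : Type*} {T : ℝ} {F : ℝ → I → ℝ} {ν : I → Measure ℝ}
    (h : LSFamily T F ν) (i : I) : IsLSMeasureOn T (fun x => F x i) (ν i) :=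
  h i

lemma measurable_measure_Iic_sub (ν : Measure ℝ) (T : ℝ) :
    Measurable fun s => ν (Iic (T - s)) :=
  Antitone.measurable fun _ _ hab => measure_mono (Iic_subset_Iic.2 (by linarith))

lemma lintegral_measure_Iic_sub_comm (ν ν' : Measure ℝ) [SFinite ν] [SFinite ν'] (T : ℝ) :
    ∫⁻ s, ν (Iic (T - s)) ∂ν' = ∫⁻ t, ν' (Iic (T - t)) ∂ν := by
  have hS : MeasurableSet {p : ℝ × ℝ | p.1 + p.2 ≤ T} :=
    measurableSet_le (by fun_prop) measurable_const
  have hslice : ∀ a : ℝ, {b : ℝ | b + a ≤ T} = Iic (T - a) ∧ {b : ℝ | a + b ≤ T} = Iic (T - a) :=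
    fun a => ⟨by ext; simp [le_sub_iff_add_le], by ext; simp [le_sub_iff_add_le']⟩
  have h₁ := Measure.prod_apply_symm (μ := ν) (ν := ν') hS
  have h₂ := Measure.prod_apply (μ := ν) (ν := ν') hS
  simp only [preimage_ofPred_eq, hslice] at h₁ h₂
  rw [← h₁, h₂]

lemma setIntegral_add_indicator_sub_sum {ι : Type*} [Fintype ι] {ν : Measure ℝ}
    [IsFiniteMeasure ν] {S t : Set ℝ} (ht : MeasurableSet t) {g : ℝ → ℝ} {H : ι → ℝ → ℝ}
    (a : ℝ) (M : ι → ℝ) (hg : IntegrableOn g S ν) (hH : ∀ i, IntegrableOn (H i) S ν) :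
    ∫ s in S, (g s + t.indicator (fun _ => a) s - ∑ i, M i * H i s) ∂ν =
      ∫ s in S, g s ∂ν + a * ν.real (S ∩ t) - ∑ i, M i * ∫ s in S, H i s ∂ν := by
  have hMH : ∀ i ∈ Finset.univ, IntegrableOn (fun s => M i * H i s) S ν :=
    fun i _ => (hH i).const_mul (M i)
  have hind : IntegrableOn (t.indicator fun _ => a) S ν :=
    ((integrable_const a).indicator ht).integrableOn
  have hgind : IntegrableOn (fun s => g s + t.indicator (fun _ => a) s) S ν := hg.add hind
  rw [integral_sub hgind (integrable_finsetSum _ hMH), integral_add hg hind,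
    setIntegral_indicator ht, setIntegral_const, smul_eq_mul, mul_comm _ a,
    integral_finsetSum _ hMH]
  simp only [integral_const_mul]

namespace IsLSMeasureOn

variable {T : ℝ} {F G : ℝ → ℝ} {ν ν' : Measure ℝ}

lemma isFiniteMeasure (h : IsLSMeasureOn T F ν) (hT : 0 ≤ T) : IsFiniteMeasure ν := by
  refine ⟨(measure_univ_le_add_compl (Icc 0 T)).trans_lt ?_⟩
  rw [h.1, add_zero, h.2 T ⟨hT, le_rfl⟩]
  exact ENNReal.ofReal_lt_top

lemma measure_Iic (h : IsLSMeasureOn T F ν) {x : ℝ} (hx : x ∈ Icc 0 T) :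
    ν (Iic x) = ENNReal.ofReal (F x) := by
  rw [← h.2 x hx]
  refine (measure_eq_measure_of_null_sdiff Icc_subset_Iic_self (measure_mono_null ?_ h.1)).symm
  exact fun y (hy : y ∈ Iic x \ Icc 0 x) (hyT : y ∈ Icc 0 T) => hy.2 ⟨hyT.1, hy.1⟩

lemma toReal_measure_Iic (h : IsLSMeasureOn T F ν) {x : ℝ} (hx : x ∈ Icc 0 T) (hF : 0 ≤ F x) :
    (ν (Iic x)).toReal = F x := by
  rw [h.measure_Iic hx, ENNReal.toReal_ofReal hF]

lemma measureReal_Icc_inter_Iic_zero (h : IsLSMeasureOn T F ν) (hT : 0 ≤ T) (hF : 0 ≤ F 0) :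
    ν.real (Icc 0 T ∩ Iic 0) = F 0 := by
  have hset : Icc 0 T ∩ Iic 0 = Icc (0:ℝ) 0 := by
    ext x
    simp only [mem_inter_iff, mem_Icc, mem_Iic]
    constructor
    · rintro ⟨⟨h0, -⟩, hx⟩; exact ⟨h0, hx⟩
    · rintro ⟨h0, hx⟩; exact ⟨⟨h0, hx.trans hT⟩, hx⟩
  rw [hset, measureReal_def, h.2 0 ⟨le_rfl, hT⟩, ENNReal.toReal_ofReal hF]

lemma integrableOn_comp_sub (h : IsLSMeasureOn T F ν) (hT : 0 ≤ T)
    (hF : ∀ x ∈ Icc 0 T, 0 ≤ F x) [IsFiniteMeasure ν'] :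
    IntegrableOn (fun s => F (T - s)) (Icc 0 T) ν' := by
  have := h.isFiniteMeasure hT
  refine IntegrableOn.congr_fun ?_ (fun s hs => h.toReal_measure_Iic
    (sub_mem_Icc_zero_iff_right.2 hs) (hF _ (sub_mem_Icc_zero_iff_right.2 hs))) measurableSet_Icc
  refine Measure.integrableOn_of_bounded (M := ν.real univ) (measure_ne_top _ _)
    (measurable_measure_Iic_sub ν T).ennreal_toReal.aestronglyMeasurable (ae_of_all _ fun s => ?_)
  rw [Real.norm_of_nonneg ENNReal.toReal_nonneg]
  exact measureReal_mono (subset_univ _)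

lemma setIntegral_comp_sub (h : IsLSMeasureOn T F ν) (hT : 0 ≤ T)
    (hF : ∀ x ∈ Icc 0 T, 0 ≤ F x) (h' : ν' (Icc 0 T)ᶜ = 0) :
    ∫ s in Icc 0 T, F (T - s) ∂ν' = (∫⁻ s, ν (Iic (T - s)) ∂ν').toReal := by
  have := h.isFiniteMeasure hT
  calc ∫ s in Icc 0 T, F (T - s) ∂ν'
      = ∫ s in Icc 0 T, (ν (Iic (T - s))).toReal ∂ν' :=
        setIntegral_congr_fun measurableSet_Icc fun s hs => (h.toReal_measure_Iic
          (sub_mem_Icc_zero_iff_right.2 hs) (hF _ (sub_mem_Icc_zero_iff_right.2 hs))).symm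
    _ = ∫ s, (ν (Iic (T - s))).toReal ∂ν' := by
        rw [Measure.restrict_eq_self_of_ae_mem (measure_eq_zero_iff_ae_notMem.1 h' |>.mono
          fun _ hs => not_not.1 hs)]
    _ = (∫⁻ s, ν (Iic (T - s)) ∂ν').toReal :=
        integral_toReal (measurable_measure_Iic_sub ν T).aemeasurable
          (ae_of_all _ fun _ => measure_lt_top _ _)

lemma setIntegral_comp_sub_comm (hF : IsLSMeasureOn T F ν) (hG : IsLSMeasureOn T G ν')
    (hT : 0 ≤ T) (hF₀ : ∀ x ∈ Icc 0 T, 0 ≤ F x) (hG₀ : ∀ x ∈ Icc 0 T, 0 ≤ G x) :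
    ∫ s in Icc 0 T, F (T - s) ∂ν' = ∫ t in Icc 0 T, G (T - t) ∂ν := by
  have := hF.isFiniteMeasure hT
  have := hG.isFiniteMeasure hT
  rw [hF.setIntegral_comp_sub hT hF₀ hG.1, hG.setIntegral_comp_sub hT hG₀ hF.1,
    lintegral_measure_Iic_sub_comm]

end IsLSMeasureOn

section Slack

variable {K J : ℕ} {T : ℝ}

lemma PrimalFeasible.nonneg {A : Matrix (Fin K) (Fin J) ℝ} {b β lam : Fin K → ℝ}
    {U : ℝ → Fin J → ℝ}
    (hU : PrimalFeasible A b β lam T U) (j : Fin J) {x : ℝ} (hx : x ∈ Icc 0 T) : 0 ≤ U x j :=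
  (hU.2.2.1 j).trans (hU.1 j ⟨le_rfl, hx.1.trans hx.2⟩ hx hx.1)

lemma DualFeasible.nonneg {A : Matrix (Fin K) (Fin J) ℝ} {c γ μ : Fin J → ℝ}
    {P : ℝ → Fin K → ℝ}
    (hP : DualFeasible A c γ μ T P) (k : Fin K) {x : ℝ} (hx : x ∈ Icc 0 T) : 0 ≤ P x k :=
  (hP.2.2.1 k).trans (hP.1 k ⟨le_rfl, hx.1.trans hx.2⟩ hx hx.1)

lemma xSlack_sub (A : Matrix (Fin K) (Fin J) ℝ) (b β lam : Fin K → ℝ) (U : ℝ → Fin J → ℝ)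
    (s : ℝ) (k : Fin K) :
    xSlack A b β lam T U (T - s) k =
      β k + (T - s) * b k + (Iic 0).indicator (fun _ => lam k) s - ∑ j, A k j * U (T - s) j := by
  simp only [xSlack, Matrix.mulVec, dotProduct, sub_lt_self_iff, indicator, mem_Iic, ← not_lt]
  split_ifs <;> ring

lemma qSlack_sub (A : Matrix (Fin K) (Fin J) ℝ) (c γ μ : Fin J → ℝ) (P : ℝ → Fin K → ℝ)
    (t : ℝ) (j : Fin J) :
    qSlack A c γ μ T P (T - t) j =
      -(γ j + (T - t) * c j + (Iic 0).indicator (fun _ => μ j) t - ∑ k, A k j * P (T - t) k) := by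
  simp only [qSlack, Matrix.mulVec, dotProduct, Matrix.transpose_apply, sub_lt_self_iff, indicator,
    mem_Iic, ← not_lt]
  split_ifs <;> ring

end Slack

section SlackIntegral

variable {K J : ℕ} {A : Matrix (Fin K) (Fin J) ℝ} {T : ℝ} (hT : 0 ≤ T)
  {ν : Measure ℝ} {F : ℝ → ℝ} (hν : IsLSMeasureOn T F ν) (hF : 0 ≤ F 0)
include hT hν hF

lemma setIntegral_xSlack_sub {b β lam : Fin K → ℝ} {U : ℝ → Fin J → ℝ}
    {νU : Fin J → Measure ℝ} (hU : PrimalFeasible A b β lam T U) (hνU : LSFamily T U νU)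
    (k : Fin K) :
    ∫ s in Icc 0 T, xSlack A b β lam T U (T - s) k ∂ν =
      ∫ s in Icc 0 T, (β k + (T - s) * b k) ∂ν + lam k * F 0 -
        ∑ j, A k j * ∫ s in Icc 0 T, U (T - s) j ∂ν := by
  have := hν.isFiniteMeasure hT
  simp only [xSlack_sub]
  rw [setIntegral_add_indicator_sub_sum measurableSet_Iic _ _
    (by fun_prop : Continuous fun s => β k + (T - s) * b k).integrableOn_Icc
    fun j => (hνU.isLSMeasureOn j).integrableOn_comp_sub hT fun _ => hU.nonneg j,
    hν.measureReal_Icc_inter_Iic_zero hT hF]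

lemma setIntegral_qSlack_sub {c γ μ : Fin J → ℝ} {P : ℝ → Fin K → ℝ}
    {νP : Fin K → Measure ℝ} (hP : DualFeasible A c γ μ T P) (hνP : LSFamily T P νP)
    (j : Fin J) :
    ∫ t in Icc 0 T, qSlack A c γ μ T P (T - t) j ∂ν =
      -(∫ t in Icc 0 T, (γ j + (T - t) * c j) ∂ν + μ j * F 0 -
        ∑ k, A k j * ∫ t in Icc 0 T, P (T - t) k ∂ν) := by
  have := hν.isFiniteMeasure hT
  simp only [qSlack_sub, integral_neg]
  rw [setIntegral_add_indicator_sub_sum measurableSet_Iic _ _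
    (by fun_prop : Continuous fun t => γ j + (T - t) * c j).integrableOn_Icc
    fun k => (hνP.isLSMeasureOn k).integrableOn_comp_sub hT fun _ => hP.nonneg k,
    hν.measureReal_Icc_inter_Iic_zero hT hF]

end SlackIntegral

/-- The duality gap identity: for every feasible `U` of M-CLP with slack `x` and
feasible `P` of M-CLP* with slack `q`,
`z*(P) − z(U) = Σ_k ∫_{[0,T]} x_k(T−s) dP_k(s) + Σ_j ∫_{[0,T]} q_j(T−t) dU_j(t)`. -/
theorem duality_gap_identity {K J : ℕ}
    (A : Matrix (Fin K) (Fin J) ℝ) (b β lam : Fin K → ℝ) (c γ μ : Fin J → ℝ) (T : ℝ)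
    (hT : 0 < T)
    (U : ℝ → Fin J → ℝ) (P : ℝ → Fin K → ℝ)
    (νU : Fin J → Measure ℝ) (νP : Fin K → Measure ℝ)
    (hU : PrimalFeasible A b β lam T U) (hP : DualFeasible A c γ μ T P)
    (hνU : LSFamily T U νU) (hνP : LSFamily T P νP) :
    zDual b β lam T P νP - zPrimal c γ μ T U νU =
      (∑ k, ∫ s in Set.Icc (0:ℝ) T, xSlack A b β lam T U (T - s) k ∂(νP k)) +
      (∑ j, ∫ t in Set.Icc (0:ℝ) T, qSlack A c γ μ T P (T - t) j ∂(νU j)) := by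
  have h0 : (0 : ℝ) ∈ Icc 0 T := ⟨le_rfl, hT.le⟩
  have hcross : ∀ k j, ∫ s in Icc 0 T, U (T - s) j ∂νP k = ∫ t in Icc 0 T, P (T - t) k ∂νU j :=
    fun k j => (hνU.isLSMeasureOn j).setIntegral_comp_sub_comm (hνP.isLSMeasureOn k) hT.le
      (fun _ => hU.nonneg j) (fun _ => hP.nonneg k)
  simp only [zDual, zPrimal,
    fun k => setIntegral_xSlack_sub hT.le (hνP.isLSMeasureOn k) (hP.nonneg k h0) hU hνU k,
    fun j => setIntegral_qSlack_sub hT.le (hνU.isLSMeasureOn j) (hU.nonneg j h0) hP hνP j,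
    hcross, Finset.sum_sub_distrib, Finset.sum_add_distrib, Finset.sum_neg_distrib]
  rw [Finset.sum_comm (f := fun k j => A k j * ∫ t in Icc 0 T, P (T - t) k ∂νU j)]
  ring
end

section
/- Fix A, b, c and regard M-CLP as a problem parametrized by ρ = (β, γ, T, λ, μ) with T > 0. If M-CLP(ρ⁰) is feasible with horizon T⁰ > 0 and M-CLP(ρ¹) is feasible with horizon T¹ > 0, then for every θ ∈ [0,1] the problem M-CLP((1−θ)ρ⁰ + θρ¹) is feasible; the same statement holds for M-CLP*. Consequently, the set of parameters ρ = (β, γ, T, λ, μ) with T > 0 for which both M-CLP(ρ) and M-CLP*(ρ) are feasible is a convex set. -/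
open MeasureTheory Filter

/-- Feasibility of M-CLP as a property of its parameters. -/
def PrimalFeasibleParams {K J : ℕ} (A : Matrix (Fin K) (Fin J) ℝ) (b : Fin K → ℝ)
    (β lam : Fin K → ℝ) (T : ℝ) : Prop :=
  ∃ U, PrimalFeasible A b β lam T U

/-- Feasibility of M-CLP* as a property of its parameters. -/
def DualFeasibleParams {K J : ℕ} (A : Matrix (Fin K) (Fin J) ℝ) (c : Fin J → ℝ)
    (γ μ : Fin J → ℝ) (T : ℝ) : Prop :=
  ∃ P, DualFeasible A c γ μ T P

/-!
Rescaling time by `s > 0` turns a feasible `U` with horizon `T * s` into the feasible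
`t ↦ U (t * s)` with horizon `T` and rate `s • b`. Bringing both horizons to
`T = (1 - θ) T⁰ + θ T¹` this way, the convex combination of the rescaled solutions is feasible,
with rate `((1 - θ) T⁰ / T + θ T¹ / T) • b = b`. M-CLP* is the M-CLP of `(-Aᵀ, -c, -γ, -μ)`.
-/

open Set

namespace PrimalFeasible

variable {K J : ℕ} {A : Matrix (Fin K) (Fin J) ℝ}

theorem comp_mul_right {b β lam : Fin K → ℝ} {T s : ℝ} {U : ℝ → Fin J → ℝ} (hs : 0 < s)
    (hU : PrimalFeasible A b β lam (T * s) U) :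
    PrimalFeasible A (s • b) β lam T (fun t => U (t * s)) := by
  obtain ⟨hmono, hrc, hzero, hcon, hfin⟩ := hU
  have mapsTo_Icc : MapsTo (· * s) (Icc 0 T) (Icc 0 (T * s)) := fun t ht =>
    ⟨mul_nonneg ht.1 hs.le, mul_le_mul_of_nonneg_right ht.2 hs.le⟩
  have mapsTo_Ico : MapsTo (· * s) (Ico 0 T) (Ico 0 (T * s)) := fun t ht =>
    ⟨mul_nonneg ht.1 hs.le, mul_lt_mul_of_pos_right ht.2 hs⟩
  refine ⟨fun j => (hmono j).comp ((monotone_mul_right_of_nonneg hs.le).monotoneOn _) mapsTo_Icc,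
    fun j t ht => ?_, by simpa using hzero, fun t ht k => ?_, fun k => ?_⟩
  · have hU : ContinuousWithinAt (fun r => U r j) (Ioi (t * s)) (t * s) := hrc j _ (mapsTo_Ico ht)
    exact hU.comp (f := (· * s)) (continuous_mul_const s).continuousWithinAt
      fun r hr => mul_lt_mul_of_pos_right hr hs
  · simpa [mul_assoc, mul_comm s] using hcon _ (mapsTo_Ico ht) k
  · simpa [mul_assoc, mul_comm s] using hfin k

theorem smul_add_smul {b₀ b₁ β₀ β₁ lam₀ lam₁ : Fin K → ℝ} {T a₀ a₁ : ℝ}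
    {U₀ U₁ : ℝ → Fin J → ℝ} (h₀ : PrimalFeasible A b₀ β₀ lam₀ T U₀)
    (h₁ : PrimalFeasible A b₁ β₁ lam₁ T U₁) (ha₀ : 0 ≤ a₀) (ha₁ : 0 ≤ a₁) :
    PrimalFeasible A (a₀ • b₀ + a₁ • b₁) (a₀ • β₀ + a₁ • β₁) (a₀ • lam₀ + a₁ • lam₁) T
      (a₀ • U₀ + a₁ • U₁) := by
  obtain ⟨hmono₀, hrc₀, hzero₀, hcon₀, hfin₀⟩ := h₀
  obtain ⟨hmono₁, hrc₁, hzero₁, hcon₁, hfin₁⟩ := h₁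
  refine ⟨fun j => ?_, fun j t ht => ?_, fun j => ?_, fun t ht k => ?_, fun k => ?_⟩
  · exact ((monotone_mul_left_of_nonneg ha₀).comp_monotoneOn (hmono₀ j)).add
      ((monotone_mul_left_of_nonneg ha₁).comp_monotoneOn (hmono₁ j))
  · exact (ContinuousWithinAt.const_mul (hrc₀ j t ht) a₀).add
      (ContinuousWithinAt.const_mul (hrc₁ j t ht) a₁)
  · simp only [Pi.add_apply, Pi.smul_apply, smul_eq_mul]
    exact add_nonneg (mul_nonneg ha₀ (hzero₀ j)) (mul_nonneg ha₁ (hzero₁ j))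
  · simp only [Pi.add_apply, Pi.smul_apply, Matrix.mulVec_add, Matrix.mulVec_smul, smul_eq_mul]
    linarith [mul_le_mul_of_nonneg_left (hcon₀ t ht k) ha₀,
      mul_le_mul_of_nonneg_left (hcon₁ t ht k) ha₁]
  · simp only [Pi.add_apply, Pi.smul_apply, Matrix.mulVec_add, Matrix.mulVec_smul, smul_eq_mul]
    linarith [mul_le_mul_of_nonneg_left (hfin₀ k) ha₀, mul_le_mul_of_nonneg_left (hfin₁ k) ha₁]

end PrimalFeasible

theorem dualFeasible_iff_primalFeasible_neg {K J : ℕ} {A : Matrix (Fin K) (Fin J) ℝ}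
    {c γ μ : Fin J → ℝ} {T : ℝ} {P : ℝ → Fin K → ℝ} :
    DualFeasible A c γ μ T P ↔ PrimalFeasible (-A.transpose) (-c) (-γ) (-μ) T P := by
  simp only [DualFeasible, PrimalFeasible, Matrix.neg_mulVec, Pi.neg_apply, mul_neg,
    ← neg_add, neg_le_neg_iff]

theorem dualFeasibleParams_iff_primalFeasibleParams_neg {K J : ℕ}
    {A : Matrix (Fin K) (Fin J) ℝ} {c γ μ : Fin J → ℝ} {T : ℝ} :
    DualFeasibleParams A c γ μ T ↔ PrimalFeasibleParams (-A.transpose) (-c) (-γ) (-μ) T :=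
  exists_congr fun _ => dualFeasible_iff_primalFeasible_neg

theorem PrimalFeasibleParams.smul_add_smul {K J : ℕ} {A : Matrix (Fin K) (Fin J) ℝ}
    {b β₀ β₁ lam₀ lam₁ : Fin K → ℝ} {T₀ T₁ a₀ a₁ : ℝ} (hT₀ : 0 < T₀) (hT₁ : 0 < T₁)
    (h₀ : PrimalFeasibleParams A b β₀ lam₀ T₀) (h₁ : PrimalFeasibleParams A b β₁ lam₁ T₁)
    (ha₀ : 0 ≤ a₀) (ha₁ : 0 ≤ a₁) (hab : a₀ + a₁ = 1) :
    PrimalFeasibleParams A b (a₀ • β₀ + a₁ • β₁) (a₀ • lam₀ + a₁ • lam₁) (a₀ * T₀ + a₁ * T₁) := by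
  set T := a₀ * T₀ + a₁ * T₁
  have hT : 0 < T := convex_Ioi (0 : ℝ) hT₀ hT₁ ha₀ ha₁ hab
  obtain ⟨U₀, hU₀⟩ := h₀
  obtain ⟨U₁, hU₁⟩ := h₁
  rw [← mul_div_cancel₀ T₀ hT.ne'] at hU₀
  rw [← mul_div_cancel₀ T₁ hT.ne'] at hU₁
  have hb : a₀ • (T₀ / T) • b + a₁ • (T₁ / T) • b = b := by
    rw [smul_smul, smul_smul, ← add_smul, mul_div_assoc', mul_div_assoc', ← add_div,
      div_self hT.ne', one_smul]
  exact ⟨_, hb ▸ (hU₀.comp_mul_right (div_pos hT₀ hT)).smul_add_smul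
    (hU₁.comp_mul_right (div_pos hT₁ hT)) ha₀ ha₁⟩

theorem DualFeasibleParams.smul_add_smul {K J : ℕ} {A : Matrix (Fin K) (Fin J) ℝ}
    {c γ₀ γ₁ μ₀ μ₁ : Fin J → ℝ} {T₀ T₁ a₀ a₁ : ℝ} (hT₀ : 0 < T₀) (hT₁ : 0 < T₁)
    (h₀ : DualFeasibleParams A c γ₀ μ₀ T₀) (h₁ : DualFeasibleParams A c γ₁ μ₁ T₁)
    (ha₀ : 0 ≤ a₀) (ha₁ : 0 ≤ a₁) (hab : a₀ + a₁ = 1) :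
    DualFeasibleParams A c (a₀ • γ₀ + a₁ • γ₁) (a₀ • μ₀ + a₁ • μ₁) (a₀ * T₀ + a₁ * T₁) := by
  rw [dualFeasibleParams_iff_primalFeasibleParams_neg] at h₀ h₁ ⊢
  simpa only [neg_add, smul_neg] using
    PrimalFeasibleParams.smul_add_smul hT₀ hT₁ h₀ h₁ ha₀ ha₁ hab

/-- Feasibility of M-CLP (resp. M-CLP*) is preserved along convex combinations of the
parameters `ρ = (β, γ, T, λ, μ)`; consequently the set of parameters with `T > 0` for
which both problems are feasible is convex. -/
theorem feasible_params_convex {K J : ℕ}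
    (A : Matrix (Fin K) (Fin J) ℝ) (b : Fin K → ℝ) (c : Fin J → ℝ) :
    (∀ (β0 β1 lam0 lam1 : Fin K → ℝ) (T0 T1 : ℝ), 0 < T0 → 0 < T1 →
      PrimalFeasibleParams A b β0 lam0 T0 → PrimalFeasibleParams A b β1 lam1 T1 →
      ∀ θ ∈ Set.Icc (0:ℝ) 1,
        PrimalFeasibleParams A b ((1 - θ) • β0 + θ • β1) ((1 - θ) • lam0 + θ • lam1)
          ((1 - θ) * T0 + θ * T1)) ∧
    (∀ (γ0 γ1 μ0 μ1 : Fin J → ℝ) (T0 T1 : ℝ), 0 < T0 → 0 < T1 →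
      DualFeasibleParams A c γ0 μ0 T0 → DualFeasibleParams A c γ1 μ1 T1 →
      ∀ θ ∈ Set.Icc (0:ℝ) 1,
        DualFeasibleParams A c ((1 - θ) • γ0 + θ • γ1) ((1 - θ) • μ0 + θ • μ1)
          ((1 - θ) * T0 + θ * T1)) ∧
    Convex ℝ {ρ : (Fin K → ℝ) × (Fin J → ℝ) × ℝ × (Fin K → ℝ) × (Fin J → ℝ) |
      0 < ρ.2.2.1 ∧ PrimalFeasibleParams A b ρ.1 ρ.2.2.2.1 ρ.2.2.1 ∧
      DualFeasibleParams A c ρ.2.1 ρ.2.2.2.2 ρ.2.2.1} := by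
  refine ⟨fun _ _ _ _ _ _ hT₀ hT₁ h₀ h₁ θ hθ =>
      h₀.smul_add_smul hT₀ hT₁ h₁ (sub_nonneg.2 hθ.2) hθ.1 (sub_add_cancel 1 θ),
    fun _ _ _ _ _ _ hT₀ hT₁ h₀ h₁ θ hθ =>
      h₀.smul_add_smul hT₀ hT₁ h₁ (sub_nonneg.2 hθ.2) hθ.1 (sub_add_cancel 1 θ), ?_⟩
  rintro x ⟨hxT, hxP, hxD⟩ y ⟨hyT, hyP, hyD⟩ a₀ a₁ ha₀ ha₁ hab
  exact ⟨convex_Ioi (0 : ℝ) hxT hyT ha₀ ha₁ hab, hxP.smul_add_smul hxT hyT hyP ha₀ ha₁ hab,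
    hxD.smul_add_smul hxT hyT hyD ha₀ ha₁ hab⟩
end

section
/- Suppose λ ≤ 0 componentwise. Let P* be a relaxed feasible solution of M-CLP*, and define P₀ : [0,T] → ℝ^K by P₀(0) = P*(0+) := lim_{s↓0} P*(s) and P₀(s) = P*(s) for 0 < s ≤ T. Then P₀ is a relaxed feasible solution of M-CLP* that is right-continuous at 0 (hence on all of [0,T]), and z*(P₀) − z*(P*) = λᵀ(P*(0+) − P*(0)) ≤ 0. -/
open MeasureTheory Filter

/-- A relaxed feasible solution of M-CLP: as a feasible solution, but right-continuity
is only required on `(0,T]`, so possibly `U(0) < U(0+)`. -/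
def RelaxedPrimalFeasible {K J : ℕ} (A : Matrix (Fin K) (Fin J) ℝ) (b β lam : Fin K → ℝ)
    (T : ℝ) (U : ℝ → Fin J → ℝ) : Prop :=
  (∀ j, MonotoneOn (fun t => U t j) (Set.Icc 0 T)) ∧
  (∀ j, ∀ t ∈ Set.Ioo (0:ℝ) T,
    Tendsto (fun s => U s j) (nhdsWithin t (Set.Ioi t)) (nhds (U t j))) ∧
  (∀ j, 0 ≤ U 0 j) ∧
  (∀ t ∈ Set.Ico (0:ℝ) T, ∀ k, A.mulVec (U t) k ≤ β k + t * b k) ∧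
  (∀ k, A.mulVec (U T) k ≤ β k + T * b k + lam k)

/-- A relaxed feasible solution of M-CLP*: as a feasible solution, but right-continuity
is only required on `(0,T]`, so possibly `P(0) < P(0+)`. -/
def RelaxedDualFeasible {K J : ℕ} (A : Matrix (Fin K) (Fin J) ℝ) (c γ μ : Fin J → ℝ)
    (T : ℝ) (P : ℝ → Fin K → ℝ) : Prop :=
  (∀ k, MonotoneOn (fun s => P s k) (Set.Icc 0 T)) ∧
  (∀ k, ∀ s ∈ Set.Ioo (0:ℝ) T,
    Tendsto (fun r => P r k) (nhdsWithin s (Set.Ioi s)) (nhds (P s k))) ∧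
  (∀ k, 0 ≤ P 0 k) ∧
  (∀ s ∈ Set.Ico (0:ℝ) T, ∀ j, γ j + s * c j ≤ A.transpose.mulVec (P s) j) ∧
  (∀ j, γ j + T * c j + μ j ≤ A.transpose.mulVec (P T) j)

/-- `ν i` is the Lebesgue–Stieltjes measure on `[0,T]` of the nondecreasing function
`F · i` (right-continuous on `(0,T]`) with the convention `F(0-) = 0`, where
`L i = F(0+) i` is the right limit at `0`: it is carried by `[0,T]`, assigns mass
`F(0+) i` to `{0}`, and satisfies `ν i [0,x] = F x i = F(x+) i` for `0 < x ≤ T`. -/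
def RelaxedLSFamily {I : Type*} (T : ℝ) (F : ℝ → I → ℝ) (L : I → ℝ)
    (ν : I → Measure ℝ) : Prop :=
  ∀ i, ν i (Set.Icc 0 T)ᶜ = 0 ∧ ν i {0} = ENNReal.ofReal (L i) ∧
    ∀ x : ℝ, 0 < x → x ≤ T → ν i (Set.Icc 0 x) = ENNReal.ofReal (F x i)

lemma relaxed_Iic {T : ℝ} (hT : 0 < T) {f : ℝ → ℝ} {Lf : ℝ} {μ : Measure ℝ}
    (hc : μ (Set.Icc 0 T)ᶜ = 0) (h0 : μ {0} = ENNReal.ofReal Lf)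
    (hx : ∀ x, 0 < x → x ≤ T → μ (Set.Icc 0 x) = ENNReal.ofReal (f x)) (a : ℝ) :
    μ (Set.Iic a) = if a < 0 then 0 else if a = 0 then ENNReal.ofReal Lf
      else ENNReal.ofReal (f (min a T)) := by
  have hdiff : μ (Set.Iic a \ Set.Icc 0 T) = 0 :=
    measure_mono_null (fun x hx => hx.2) hc
  have hkey : μ (Set.Iic a) = μ (Set.Iic a ∩ Set.Icc 0 T) := by
    rw [← measure_inter_add_diff (Set.Iic a) measurableSet_Icc, hdiff, add_zero]
  by_cases ha : a < 0
  · rw [if_pos ha, hkey]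
    have : Set.Iic a ∩ Set.Icc 0 T = ∅ := by
      ext x
      simp only [Set.mem_inter_iff, Set.mem_Iic, Set.mem_Icc, Set.mem_empty_iff_false,
        iff_false, not_and]
      intro h1 h2
      exact absurd (h2.trans h1) (not_le.2 ha)
    rw [this, measure_empty]
  · push_neg at ha
    have hset : Set.Iic a ∩ Set.Icc 0 T = Set.Icc 0 (min a T) := by
      ext x
      simp only [Set.mem_inter_iff, Set.mem_Iic, Set.mem_Icc, le_min_iff]
      tauto
    rw [if_neg (not_lt.2 ha), hkey, hset]
    by_cases ha0 : a = 0
    · subst ha0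
      rw [if_pos rfl, min_eq_left hT.le, Set.Icc_self, h0]
    · have ha' : 0 < a := lt_of_le_of_ne ha (Ne.symm ha0)
      rw [if_neg ha0]
      exact hx _ (lt_min ha' hT) (min_le_right _ _)

lemma relaxed_measure_ext {T : ℝ} (hT : 0 < T) {f g : ℝ → ℝ} {Lf Lg : ℝ}
    (hfg : ∀ x, 0 < x → x ≤ T → f x = g x) (hLfg : Lf = Lg)
    {μ ν : Measure ℝ}
    (hμc : μ (Set.Icc 0 T)ᶜ = 0) (hμ0 : μ {0} = ENNReal.ofReal Lf)
    (hμx : ∀ x, 0 < x → x ≤ T → μ (Set.Icc 0 x) = ENNReal.ofReal (f x))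
    (hνc : ν (Set.Icc 0 T)ᶜ = 0) (hν0 : ν {0} = ENNReal.ofReal Lg)
    (hνx : ∀ x, 0 < x → x ≤ T → ν (Set.Icc 0 x) = ENNReal.ofReal (g x)) :
    μ = ν := by
  have hfin : IsFiniteMeasure μ := by
    constructor
    have h1 : μ Set.univ ≤ μ (Set.Icc 0 T) + μ (Set.Icc 0 T)ᶜ := by
      rw [← Set.union_compl_self (Set.Icc (0:ℝ) T)]
      exact measure_union_le _ _
    rw [hμc, add_zero, hμx T hT le_rfl] at h1
    exact lt_of_le_of_lt h1 ENNReal.ofReal_lt_top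
  refine Measure.ext_of_Iic μ ν fun a => ?_
  rw [relaxed_Iic hT hμc hμ0 hμx a, relaxed_Iic hT hνc hν0 hνx a]
  split_ifs with h1 h2
  · rfl
  · rw [hLfg]
  · rw [hfg _ (lt_min (lt_of_le_of_ne (not_lt.1 h1) (Ne.symm h2)) hT) (min_le_right _ _)]

/-- If `λ ≤ 0` and `P*` is a relaxed feasible solution of M-CLP* with right limit
`L = P*(0+)` at `0`, then replacing `P*(0)` by `L` gives a relaxed feasible solution
`P₀` that is right-continuous at `0` (hence on all of `[0,T]`), and
`z*(P₀) − z*(P*) = λᵀ(P*(0+) − P*(0)) ≤ 0`. -/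
theorem rightContinuous_modification_dual {K J : ℕ}
    (A : Matrix (Fin K) (Fin J) ℝ) (b β lam : Fin K → ℝ) (c γ μ : Fin J → ℝ) (T : ℝ)
    (hT : 0 < T) (hlam : ∀ k, lam k ≤ 0)
    (P : ℝ → Fin K → ℝ) (hP : RelaxedDualFeasible A c γ μ T P)
    (L : Fin K → ℝ)
    (hL : ∀ k, Tendsto (fun s => P s k) (nhdsWithin 0 (Set.Ioi 0)) (nhds (L k))) :
    RelaxedDualFeasible A c γ μ T (fun s => if s = 0 then L else P s) ∧
    (∀ k, ∀ s ∈ Set.Ico (0:ℝ) T,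
      Tendsto (fun r => (if r = 0 then L else P r) k) (nhdsWithin s (Set.Ioi s))
        (nhds ((if s = 0 then L else P s) k))) ∧
    (∀ νStar ν0 : Fin K → Measure ℝ,
      RelaxedLSFamily T P L νStar →
      RelaxedLSFamily T (fun s => if s = 0 then L else P s) L ν0 →
      zDual b β lam T (fun s => if s = 0 then L else P s) ν0 - zDual b β lam T P νStar =
        ∑ k, lam k * (L k - P 0 k)) ∧
    (∑ k, lam k * (L k - P 0 k)) ≤ 0 := by
  obtain ⟨hmono, hrc, hnn, hcon, hconT⟩ := hP
  have hmemIoo : Set.Ioo (0:ℝ) T ∈ nhdsWithin (0:ℝ) (Set.Ioi 0) :=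
    Ioo_mem_nhdsGT_of_mem ⟨le_rfl, hT⟩
  have hPL : ∀ k, P 0 k ≤ L k := by
    intro k
    refine ge_of_tendsto (hL k) ?_
    filter_upwards [hmemIoo] with r hr
    exact hmono k ⟨le_rfl, hT.le⟩ ⟨hr.1.le, hr.2.le⟩ hr.1.le
  have hLP : ∀ k, ∀ s, 0 < s → s ≤ T → L k ≤ P s k := by
    intro k s hs hsT
    refine le_of_tendsto (hL k) ?_
    filter_upwards [Ioo_mem_nhdsGT_of_mem (Set.mem_Ico.2 ⟨le_rfl, hs⟩)] with r hr
    exact hmono k ⟨hr.1.le, hr.2.le.trans hsT⟩ ⟨hs.le, hsT⟩ hr.2.le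
  have hmono0 : ∀ k, MonotoneOn (fun s => (if s = 0 then L else P s) k) (Set.Icc 0 T) := by
    intro k x hx y hy hxy
    by_cases hx0 : x = 0
    · subst hx0
      by_cases hy0 : y = 0
      · subst hy0; exact le_rfl
      · simp only [if_pos rfl, if_neg hy0]
        exact hLP k y (lt_of_le_of_ne hy.1 (Ne.symm hy0)) hy.2
    · have hy0 : y ≠ 0 := by
        intro h; subst h
        exact hx0 (le_antisymm (hxy.trans_eq rfl |>.trans le_rfl |> fun _ => hxy) hx.1 ▸ rfl)
      simp only [if_neg hx0, if_neg hy0]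
      exact hmono k hx hy hxy
  have hrc0 : ∀ k, ∀ s ∈ Set.Ico (0:ℝ) T,
      Tendsto (fun r => (if r = 0 then L else P r) k) (nhdsWithin s (Set.Ioi s))
        (nhds ((if s = 0 then L else P s) k)) := by
    intro k s hs
    by_cases hs0 : s = 0
    · subst hs0
      simp only [if_pos rfl]
      refine (hL k).congr' ?_
      filter_upwards [self_mem_nhdsWithin] with r hr
      rw [if_neg (ne_of_gt (Set.mem_Ioi.1 hr))]
    · have hs' : 0 < s := lt_of_le_of_ne hs.1 (Ne.symm hs0)
      simp only [if_neg hs0]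
      refine (hrc k s ⟨hs', hs.2⟩).congr' ?_
      filter_upwards [self_mem_nhdsWithin] with r hr
      rw [if_neg (ne_of_gt (hs'.trans (Set.mem_Ioi.1 hr)))]
  have hfeas : RelaxedDualFeasible A c γ μ T (fun s => if s = 0 then L else P s) := by
    refine ⟨hmono0, fun k s hs => hrc0 k s ⟨hs.1.le, hs.2⟩, ?_, ?_, ?_⟩
    · intro k
      simp only [if_pos rfl]
      exact (hnn k).trans (hPL k)
    · intro s hs j
      by_cases hs0 : s = 0
      · subst hs0
        simp only [if_pos rfl]
        have htc : Tendsto (fun r => A.transpose.mulVec (P r) j)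
            (nhdsWithin 0 (Set.Ioi 0)) (nhds (A.transpose.mulVec L j)) := by
          simp only [Matrix.mulVec, dotProduct]
          exact tendsto_finset_sum _ fun k _ => ((hL k).const_mul _)
        have hlc : Tendsto (fun r : ℝ => γ j + r * c j) (nhdsWithin 0 (Set.Ioi 0))
            (nhds (γ j + 0 * c j)) :=
          ((continuous_const.add (continuous_id.mul continuous_const)).tendsto 0).mono_left
            nhdsWithin_le_nhds
        refine le_of_tendsto_of_tendsto hlc htc ?_
        filter_upwards [hmemIoo] with r hr
        exact hcon r ⟨hr.1.le, hr.2⟩ j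
      · have hs' : 0 < s := lt_of_le_of_ne hs.1 (Ne.symm hs0)
        simp only [if_neg hs0]
        exact hcon s hs j
    · intro j
      simp only [if_neg hT.ne']
      exact hconT j
  refine ⟨hfeas, hrc0, ?_, ?_⟩
  · intro νStar ν0 hνStar hν0
    have hν : ∀ k, ν0 k = νStar k := by
      intro k
      obtain ⟨h1, h2, h3⟩ := hν0 k
      obtain ⟨h1', h2', h3'⟩ := hνStar k
      exact relaxed_measure_ext hT
        (f := fun x => (if x = 0 then L else P x) k) (g := fun x => P x k)
        (fun x hx _ => by simp [hx.ne']) rfl h1 h2 h3 h1' h2' h3'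
    have hS : (∑ k, ∫ s in Set.Icc (0:ℝ) T, (β k + (T - s) * b k) ∂(ν0 k)) =
        ∑ k, ∫ s in Set.Icc (0:ℝ) T, (β k + (T - s) * b k) ∂(νStar k) :=
      Finset.sum_congr rfl fun k _ => by rw [hν k]
    simp only [zDual, if_pos rfl]
    rw [hS]
    simp only [if_true, mul_sub, Finset.sum_sub_distrib]
    ring
  · refine Finset.sum_nonpos fun k _ => ?_
    exact mul_nonpos_iff.2 (Or.inr ⟨hlam k, sub_nonneg.2 (hPL k)⟩)
end

section
/- Let A be a real m×n matrix, b ∈ ℝ^m, c ∈ ℝ^n, and consider the linear program: maximize cᵀx subject to A·x = b and x ≥ 0. If x* is the unique optimal solution, i.e. x* is feasible and every feasible x with x ≠ x* satisfies cᵀx < cᵀx*, then the columns of A indexed by the support {i : x*_i > 0} are linearly independent; in particular, x* has at most m strictly positive coordinates. -/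
open Matrix

/-- If `x*` is the unique optimal solution of the LP `max cᵀx s.t. A·x = b, x ≥ 0`,
then the columns of `A` indexed by the support of `x*` are linearly independent;
in particular `x*` has at most `m` strictly positive coordinates. -/
theorem unique_optimal_implies_basic {m n : ℕ}
    (A : Matrix (Fin m) (Fin n) ℝ) (b : Fin m → ℝ) (c : Fin n → ℝ)
    (x : Fin n → ℝ) (hAx : A.mulVec x = b) (hx : ∀ i, 0 ≤ x i)
    (huniq : ∀ y : Fin n → ℝ, A.mulVec y = b → (∀ i, 0 ≤ y i) → y ≠ x →
      c ⬝ᵥ y < c ⬝ᵥ x) :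
    LinearIndependent ℝ (fun i : {i : Fin n // 0 < x i} => A.transpose i.1) ∧
    (Finset.univ.filter (fun i : Fin n => 0 < x i)).card ≤ m := by
  have hli : LinearIndependent ℝ (fun i : {i : Fin n // 0 < x i} => A.transpose i.1) := by
    rw [Fintype.linearIndependent_iff]
    intro g hg
    by_contra hne
    push_neg at hne
    obtain ⟨j, hj⟩ := hne
    set d : Fin n → ℝ := fun i => if h : 0 < x i then g ⟨i, h⟩ else 0 with hd
    have hdj : d j.1 ≠ 0 := by simp [hd, j.2]; exact hj
    have hdsupp : ∀ i, d i ≠ 0 → 0 < x i := by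
      intro i hi
      by_contra h
      simp [hd, h] at hi
    have hAd : A.mulVec d = 0 := by
      funext k
      have h0 := congrFun hg k
      simp only [Finset.sum_apply, Pi.smul_apply, Pi.zero_apply, transpose_apply,
        smul_eq_mul] at h0
      show ∑ i, A k i * d i = 0
      rw [← h0, ← Fintype.sum_subtype_add_sum_subtype (fun i => 0 < x i)
        (fun i => A k i * d i)]
      have e1 : ∀ i : {i : Fin n // 0 < x i}, A k i.1 * d i.1 = g i * A k i.1 := by
        intro i
        simp [hd, i.2, mul_comm]
      have e2 : ∀ i : {i : Fin n // ¬ 0 < x i}, A k i.1 * d i.1 = 0 := by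
        intro i
        simp [hd, i.2]
      rw [Finset.sum_congr rfl fun i _ => e1 i, Finset.sum_congr rfl fun i _ => e2 i]
      simp
    have hn : Nonempty (Fin n) := ⟨j.1⟩
    set t : Fin n → ℝ := fun i => if d i = 0 then 1 else x i / |d i| with ht
    set ε : ℝ := Finset.univ.inf' Finset.univ_nonempty t with hε
    have hεpos : 0 < ε := by
      rw [hε, Finset.lt_inf'_iff]
      intro i _
      rw [ht]
      by_cases hdi : d i = 0
      · simp [hdi]
      · have := div_pos (hdsupp i hdi) (abs_pos.mpr hdi)
        simpa [hdi] using this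
    have hεle : ∀ i, ε * |d i| ≤ x i := by
      intro i
      by_cases hdi : d i = 0
      · simp [hdi, hx i]
      · have h1 : ε ≤ t i := Finset.inf'_le _ (Finset.mem_univ i)
        rw [ht] at h1
        simp [hdi] at h1
        calc ε * |d i| ≤ (x i / |d i|) * |d i| := by
              apply mul_le_mul_of_nonneg_right h1 (abs_nonneg _)
          _ = x i := div_mul_cancel₀ _ (abs_ne_zero.mpr hdi)
    have key : ∀ s : ℝ, s = 1 ∨ s = -1 → c ⬝ᵥ (x + (s * ε) • d) < c ⬝ᵥ x := by
      intro s hs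
      apply huniq
      · rw [Matrix.mulVec_add, Matrix.mulVec_smul, hAd, hAx]
        simp
      · intro i
        have h1 : |s * ε * d i| ≤ x i := by
          rw [abs_mul]
          have : |s * ε| = ε := by
            rcases hs with h | h <;> simp [h, abs_of_pos hεpos]
          rw [this]; exact hεle i
        have := neg_abs_le (s * ε * d i)
        simp only [Pi.add_apply, Pi.smul_apply, smul_eq_mul]
        linarith
      · intro hcon
        have := congrFun hcon j.1
        simp only [Pi.add_apply, Pi.smul_apply, smul_eq_mul] at this
        have hz : s * ε * d j.1 = 0 := by linarith
        rcases hs with h | h <;> simp [h] at hz <;>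
          rcases hz with h' | h' <;> first | exact hεpos.ne' h' | exact hdj h'
    have h1 := key 1 (Or.inl rfl)
    have h2 := key (-1) (Or.inr rfl)
    rw [dotProduct_add, dotProduct_smul, smul_eq_mul] at h1 h2
    nlinarith [h1, h2]
  refine ⟨hli, ?_⟩
  have h1 := hli.fintype_card_le_finrank
  rw [Module.finrank_fin_fun] at h1
  rwa [Fintype.card_subtype] at h1
end
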